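/- arXiv:1910.03161 — 3 statements merged into one kernel-verified Lean document; each statement's English description precedes it below -/
import Mathlib

section
/- The total energy function E(ρ, m, S) defined as (1/2)|m|²/ρ + (a/(γ−1)) ρ^γ exp((γ−1) S/ρ) for ρ > 0, as 0 when ρ = 0, m = 0 and S ≤ 0, and as +∞ otherwise, is a convex function on ℝ × ℝ^d × ℝ. -/
/-!
On `{ρ > 0}` the energy is `½|m|²/ρ + (a/(γ-1)) ρ^γ e^{(γ-1)S/ρ}`. The first term is the
perspective `(ρ, m) ↦ ρ f(m/ρ)` of `f = ½|·|²`; the second equals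
`(a/(γ-1)) ρ e^{(γ-1)(S + ρ log ρ)/ρ}`, the perspective of the increasing convex function
`u ↦ e^{(γ-1)u}` evaluated at the convex function `S + ρ log ρ`. Perspectives of convex functions
are convex. Mixing a state with a vacuum state `(0, 0, S')`, `S' ≤ 0`, gives the state scaled by
`t` with its entropy lowered; the energy is increasing in `S` and subhomogeneous
(`(tρ)^γ ≤ t ρ^γ`), which settles that case. Everywhere else the energy is `+∞`.
-/

open scoped ENNReal
open Classical

/-- The total energy of the Euler system, as an extended-real-valued function of
`(ρ, m, S)`. -/
noncomputable def totalEnergy (a γ : ℝ) (d : ℕ)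
    (p : ℝ × (EuclideanSpace ℝ (Fin d)) × ℝ) : ℝ≥0∞ :=
  if 0 < p.1 then
    ENNReal.ofReal ((1 / 2) * ‖p.2.1‖ ^ 2 / p.1 +
      a / (γ - 1) * p.1 ^ γ * Real.exp ((γ - 1) * p.2.2 / p.1))
  else if p.1 = 0 ∧ p.2.1 = 0 ∧ p.2.2 ≤ 0 then 0 else ⊤

open Real Set

theorem ConvexOn.perspective {E : Type*} [AddCommGroup E] [Module ℝ E] {s : Set E} {f : E → ℝ}
    (hf : ConvexOn ℝ s f) :
    ConvexOn ℝ {p : ℝ × E | 0 < p.1 ∧ p.1⁻¹ • p.2 ∈ s} fun p ↦ p.1 * f (p.1⁻¹ • p.2) := by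
  have key : ∀ ⦃p : ℝ × E⦄, 0 < p.1 → p.1⁻¹ • p.2 ∈ s → ∀ ⦃q : ℝ × E⦄, 0 < q.1 →
      q.1⁻¹ • q.2 ∈ s → ∀ ⦃a b : ℝ⦄, 0 ≤ a → 0 ≤ b → a + b = 1 →
      0 < (a • p + b • q).1 ∧ (a • p + b • q).1⁻¹ • (a • p + b • q).2 ∈ s ∧
        (a • p + b • q).1 * f ((a • p + b • q).1⁻¹ • (a • p + b • q).2) ≤
          a * (p.1 * f (p.1⁻¹ • p.2)) + b * (q.1 * f (q.1⁻¹ • q.2)) := by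
    intro p hp hps q hq hqs a b ha hb hab
    set ρ := (a • p + b • q).1
    have hρ_eq : ρ = a * p.1 + b * q.1 := rfl
    have hρ : 0 < ρ := convex_Ioi (0 : ℝ) hp hq ha hb hab
    -- the perspective point of the combination is the combination of the perspective points
    -- with the weights `a p.1 / ρ` and `b q.1 / ρ`
    have hweights : a * p.1 / ρ + b * q.1 / ρ = 1 := by
      field_simp; exact hρ_eq.symm
    have hpoint : ρ⁻¹ • (a • p + b • q).2 =
        (a * p.1 / ρ) • (p.1⁻¹ • p.2) + (b * q.1 / ρ) • (q.1⁻¹ • q.2) := by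
      simp only [Prod.snd_add, Prod.smul_snd, smul_add, smul_smul]
      congr 2 <;> field_simp
    refine ⟨hρ, hpoint ▸ hf.1 hps hqs (by positivity) (by positivity) hweights, ?_⟩
    calc ρ * f (ρ⁻¹ • (a • p + b • q).2)
        ≤ ρ * ((a * p.1 / ρ) • f (p.1⁻¹ • p.2) + (b * q.1 / ρ) • f (q.1⁻¹ • q.2)) := by
          rw [hpoint]
          exact mul_le_mul_of_nonneg_left
            (hf.2 hps hqs (by positivity) (by positivity) hweights) hρ.le
      _ = a * (p.1 * f (p.1⁻¹ • p.2)) + b * (q.1 * f (q.1⁻¹ • q.2)) := by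
          simp only [smul_eq_mul]; field_simp
  refine ⟨?_, ?_⟩
  · rintro p ⟨hp, hps⟩ q ⟨hq, hqs⟩ a b ha hb hab
    exact ⟨(key hp hps hq hqs ha hb hab).1, (key hp hps hq hqs ha hb hab).2.1⟩
  · rintro p ⟨hp, hps⟩ q ⟨hq, hqs⟩ a b ha hb hab
    exact (key hp hps hq hqs ha hb hab).2.2

theorem convexOn_norm_sq_div {V : Type*} [NormedAddCommGroup V] [NormedSpace ℝ V] :
    ConvexOn ℝ {p : ℝ × V | 0 < p.1} fun p ↦ ‖p.2‖ ^ 2 / p.1 := by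
  have h := (convexOn_univ_norm.pow (fun _ _ ↦ norm_nonneg _) 2).perspective (E := V)
  simp only [mem_univ, and_true, Pi.pow_apply] at h
  refine h.congr fun p (hp : 0 < p.1) ↦ ?_
  simp only [norm_smul, Real.norm_of_nonneg (inv_nonneg.2 hp.le)]
  field_simp

theorem convexOn_rpow_mul_exp_div {γ : ℝ} (hγ : 1 ≤ γ) :
    ConvexOn ℝ {p : ℝ × ℝ | 0 < p.1} fun p ↦ p.1 ^ γ * exp ((γ - 1) * p.2 / p.1) := by
  have hP := (convexOn_exp.comp_linearMap ((γ - 1) • LinearMap.id)).perspective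
  simp only [preimage_univ, mem_univ, and_true, Function.comp_apply, LinearMap.smul_apply,
    LinearMap.id_apply, smul_eq_mul] at hP
  have hrepr : ∀ ρ S : ℝ, 0 < ρ →
      ρ ^ γ * exp ((γ - 1) * S / ρ) = ρ * exp ((γ - 1) * (ρ⁻¹ * (S + ρ * log ρ))) := by
    intro ρ S hρ
    rw [rpow_def_of_pos hρ, ← exp_add, ← exp_log hρ, ← exp_add, log_exp]
    congr 1
    field_simp
    ring
  refine ⟨(convex_Ioi 0).linear_preimage (LinearMap.fst ℝ ℝ ℝ), ?_⟩
  rintro p (hp : 0 < p.1) q (hq : 0 < q.1) a b ha hb hab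
  have hρ : 0 < a * p.1 + b * q.1 := hP.1 hp hq ha hb hab
  have hlog := convexOn_mul_log.2 hp.le hq.le ha hb hab
  have hpersp := hP.2 (x := (p.1, p.2 + p.1 * log p.1)) (y := (q.1, q.2 + q.1 * log q.1))
    hp hq ha hb hab
  simp only [smul_eq_mul, Prod.fst_add, Prod.snd_add, Prod.smul_fst, Prod.smul_snd] at hlog hpersp ⊢
  rw [hrepr _ _ hρ, hrepr _ _ hp, hrepr _ _ hq]
  refine le_trans ?_ hpersp
  gcongr _ * exp (_ * (_ * ?_))
  linarith

noncomputable def energyDensity {V : Type*} [NormedAddCommGroup V] (a γ : ℝ) (p : ℝ × V × ℝ) :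
    ℝ :=
  (1 / 2) * ‖p.2.1‖ ^ 2 / p.1 + a / (γ - 1) * p.1 ^ γ * exp ((γ - 1) * p.2.2 / p.1)

def IsVacuum {V : Type*} [Zero V] (p : ℝ × V × ℝ) : Prop :=
  p.1 = 0 ∧ p.2.1 = 0 ∧ p.2.2 ≤ 0

theorem IsVacuum.smul_add {V : Type*} [AddCommGroup V] [Module ℝ V] {p q : ℝ × V × ℝ}
    (hp : IsVacuum p) (hq : IsVacuum q) {s t : ℝ} (hs : 0 ≤ s) (ht : 0 ≤ t) :
    IsVacuum (s • p + t • q) := by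
  obtain ⟨hp₁, hp₂, hp₃⟩ := hp
  obtain ⟨hq₁, hq₂, hq₃⟩ := hq
  refine ⟨?_, ?_, ?_⟩
  · simp [hp₁, hq₁]
  · simp [hp₂, hq₂]
  · simp only [Prod.snd_add, Prod.smul_snd, smul_eq_mul]
    nlinarith

section energyDensity

variable {V : Type*} [NormedAddCommGroup V] {a γ : ℝ}

theorem energyDensity_nonneg (ha : 0 ≤ a) (hγ : 1 ≤ γ) {p : ℝ × V × ℝ} (hp : 0 ≤ p.1) :
    0 ≤ energyDensity a γ p := by
  have hc : 0 ≤ a / (γ - 1) := div_nonneg ha (by linarith)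
  unfold energyDensity
  positivity

theorem energyDensity_mono_entropy (ha : 0 ≤ a) (hγ : 1 ≤ γ) {ρ : ℝ} (hρ : 0 ≤ ρ) (m : V) :
    Monotone fun S ↦ energyDensity a γ (ρ, m, S) := by
  have hc : 0 ≤ a / (γ - 1) := div_nonneg ha (by linarith)
  intro S S' hS
  simp only [energyDensity]
  gcongr

variable [NormedSpace ℝ V]

theorem convexOn_energyDensity (ha : 0 ≤ a) (hγ : 1 ≤ γ) :
    ConvexOn ℝ {p : ℝ × V × ℝ | 0 < p.1} (energyDensity a γ) := by
  have hkin := convexOn_norm_sq_div.comp_linearMap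
    (LinearMap.prodMap LinearMap.id (LinearMap.fst ℝ V ℝ))
  have hint := (convexOn_rpow_mul_exp_div hγ).comp_linearMap
    (LinearMap.prodMap LinearMap.id (LinearMap.snd ℝ V ℝ))
  refine ((hkin.smul (by norm_num : (0 : ℝ) ≤ 1 / 2)).add
    (hint.smul (div_nonneg ha (by linarith : (0 : ℝ) ≤ γ - 1)))).congr fun p _ ↦ ?_
  simp only [energyDensity, Pi.add_apply, Function.comp_apply, LinearMap.prodMap_apply,
    LinearMap.id_apply, LinearMap.fst_apply, LinearMap.snd_apply, smul_eq_mul]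
  ring

theorem energyDensity_smul_le (ha : 0 ≤ a) (hγ : 1 ≤ γ) {p : ℝ × V × ℝ} (hp : 0 < p.1)
    {t : ℝ} (ht0 : 0 < t) (ht1 : t ≤ 1) :
    energyDensity a γ (t • p) ≤ t * energyDensity a γ p := by
  have hc : 0 ≤ a / (γ - 1) := div_nonneg ha (by linarith)
  have htγ : t ^ γ ≤ t := by simpa using rpow_le_rpow_of_exponent_ge ht0 ht1 hγ
  have hkin : (1 / 2) * ‖t • p.2.1‖ ^ 2 / (t * p.1) = t * ((1 / 2) * ‖p.2.1‖ ^ 2 / p.1) := by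
    rw [norm_smul, Real.norm_of_nonneg ht0.le]
    field_simp
  have hint : (γ - 1) * (t * p.2.2) / (t * p.1) = (γ - 1) * p.2.2 / p.1 := by
    field_simp
  simp only [energyDensity, Prod.smul_fst, Prod.smul_snd, smul_eq_mul]
  rw [hkin, hint, mul_rpow ht0.le hp.le, mul_add]
  refine add_le_add le_rfl ?_
  calc a / (γ - 1) * (t ^ γ * p.1 ^ γ) * exp ((γ - 1) * p.2.2 / p.1)
      ≤ a / (γ - 1) * (t * p.1 ^ γ) * exp ((γ - 1) * p.2.2 / p.1) := by gcongr
    _ = t * (a / (γ - 1) * p.1 ^ γ * exp ((γ - 1) * p.2.2 / p.1)) := by ring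

theorem energyDensity_smul_add_vacuum_le (ha : 0 ≤ a) (hγ : 1 ≤ γ) {p q : ℝ × V × ℝ}
    (hp : 0 < p.1) (hq : IsVacuum q) {t : ℝ} (ht0 : 0 < t) (ht1 : t ≤ 1) :
    energyDensity a γ (t • p + (1 - t) • q) ≤ t * energyDensity a γ p := by
  obtain ⟨hq₁, hq₂, hq₃⟩ := hq
  calc energyDensity a γ (t • p + (1 - t) • q)
      = energyDensity a γ (t * p.1, t • p.2.1, t * p.2.2 + (1 - t) * q.2.2) := by
        congr 1
        ext <;> simp [hq₁, hq₂]
    _ ≤ energyDensity a γ (t • p) :=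
        energyDensity_mono_entropy ha hγ (by positivity) _ (by rw [smul_eq_mul]; nlinarith)
    _ ≤ t * energyDensity a γ p := energyDensity_smul_le ha hγ hp ht0 ht1

end energyDensity

section totalEnergy

variable {a γ : ℝ} {d : ℕ} {p q : ℝ × EuclideanSpace ℝ (Fin d) × ℝ}

theorem totalEnergy_of_pos (hp : 0 < p.1) :
    totalEnergy a γ d p = ENNReal.ofReal (energyDensity a γ p) :=
  if_pos hp

theorem totalEnergy_of_isVacuum (hp : IsVacuum p) : totalEnergy a γ d p = 0 := by
  rw [totalEnergy, if_neg hp.1.not_gt]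
  exact if_pos hp

theorem pos_or_isVacuum_of_totalEnergy_ne_top (h : totalEnergy a γ d p ≠ ⊤) :
    0 < p.1 ∨ IsVacuum p := by
  by_contra! hp
  exact h (by rw [totalEnergy, if_neg hp.1.not_gt]; exact if_neg hp.2)

theorem totalEnergy_smul_add_le_of_pos (ha : 0 ≤ a) (hγ : 1 ≤ γ) (hp : 0 < p.1)
    (hq : 0 < q.1) {t : ℝ} (ht0 : 0 ≤ t) (ht1 : t ≤ 1) :
    totalEnergy a γ d (t • p + (1 - t) • q) ≤
      ENNReal.ofReal t * totalEnergy a γ d p + ENNReal.ofReal (1 - t) * totalEnergy a γ d q := by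
  have hconv := convexOn_energyDensity (V := EuclideanSpace ℝ (Fin d)) ha hγ
  have h1t : 0 ≤ 1 - t := by linarith
  rw [totalEnergy_of_pos (hconv.1 hp hq ht0 h1t (by ring)), totalEnergy_of_pos hp,
    totalEnergy_of_pos hq, ← ENNReal.ofReal_mul ht0, ← ENNReal.ofReal_mul h1t,
    ← ENNReal.ofReal_add (mul_nonneg ht0 (energyDensity_nonneg ha hγ hp.le))
      (mul_nonneg h1t (energyDensity_nonneg ha hγ hq.le))]
  exact ENNReal.ofReal_le_ofReal (hconv.2 hp hq ht0 h1t (by ring))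

theorem totalEnergy_smul_add_vacuum_le (ha : 0 ≤ a) (hγ : 1 ≤ γ) (hp : 0 < p.1)
    (hq : IsVacuum q) {t : ℝ} (ht0 : 0 < t) (ht1 : t ≤ 1) :
    totalEnergy a γ d (t • p + (1 - t) • q) ≤ ENNReal.ofReal t * totalEnergy a γ d p := by
  have hr : 0 < (t • p + (1 - t) • q).1 := by
    simp only [Prod.fst_add, Prod.smul_fst, hq.1, smul_eq_mul]
    positivity
  rw [totalEnergy_of_pos hr, totalEnergy_of_pos hp, ← ENNReal.ofReal_mul ht0.le]
  exact ENNReal.ofReal_le_ofReal (energyDensity_smul_add_vacuum_le ha hγ hp hq ht0 ht1)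

end totalEnergy

theorem totalEnergy_convex_general (a γ : ℝ) (ha : 0 < a) (hγ : 1 < γ) (d : ℕ)
    (p q : ℝ × (EuclideanSpace ℝ (Fin d)) × ℝ) (t : ℝ) (ht : t ∈ Set.Icc (0 : ℝ) 1) :
    totalEnergy a γ d (t • p + (1 - t) • q) ≤
      ENNReal.ofReal t * totalEnergy a γ d p +
        ENNReal.ofReal (1 - t) * totalEnergy a γ d q := by
  obtain ⟨ht0, ht1⟩ := ht
  rcases ht0.eq_or_lt with rfl | ht0
  · simp
  rcases ht1.eq_or_lt with rfl | ht1
  · simp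
  have h1t : 0 < 1 - t := by linarith
  by_cases hpE : totalEnergy a γ d p = ⊤
  · simp [hpE, ht0]
  by_cases hqE : totalEnergy a γ d q = ⊤
  · simp [hqE, ht1]
  rcases pos_or_isVacuum_of_totalEnergy_ne_top hpE with hp | hp <;>
    rcases pos_or_isVacuum_of_totalEnergy_ne_top hqE with hq | hq
  · exact totalEnergy_smul_add_le_of_pos ha.le hγ.le hp hq ht0.le ht1.le
  · rw [totalEnergy_of_isVacuum hq, mul_zero, add_zero]
    exact totalEnergy_smul_add_vacuum_le ha.le hγ.le hp hq ht0 ht1.le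
  · have h := totalEnergy_smul_add_vacuum_le ha.le hγ.le hq hp h1t (by linarith)
    rw [sub_sub_cancel, add_comm] at h
    rw [totalEnergy_of_isVacuum hp, mul_zero, zero_add]
    exact h
  · rw [totalEnergy_of_isVacuum (hp.smul_add hq ht0.le h1t.le)]
    exact zero_le

/-- The total energy is a convex function on `ℝ × ℝ^d × ℝ`. -/
theorem totalEnergy_convex (a γ : ℝ) (ha : 0 < a) (hγ : 1 < γ) (d : ℕ) (hd : 1 ≤ d)
    (p q : ℝ × (EuclideanSpace ℝ (Fin d)) × ℝ) (t : ℝ) (ht : t ∈ Set.Icc (0 : ℝ) 1) :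
    totalEnergy a γ d (t • p + (1 - t) • q) ≤
      ENNReal.ofReal t * totalEnergy a γ d p +
        ENNReal.ofReal (1 - t) * totalEnergy a γ d q :=
  totalEnergy_convex_general a γ ha hγ d p q t ht
end

section
/- The total energy function E(ρ, m, S) = (1/2)|m|²/ρ + (a/(γ−1)) ρ^γ exp((γ−1) S/ρ) (extended as above) is lower semicontinuous on ℝ^{d+2}. -/
/-!
On `{ρ > 0}` the energy is finite and continuous, and on `{ρ < 0}` it is identically `+∞`,
so only the vacuum points `(0, m, S)` matter. There the energy vanishes exactly on the closed set
`{m = 0, S ≤ 0}`; off it the energy is `+∞`, and it also tends to `+∞` as `ρ ↓ 0`: through the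
kinetic term `|m|² / (2ρ)` when `m ≠ 0`, and through `ρ^γ exp((γ - 1) S / ρ)` when `S > 0`,
since the exponential beats any power of `ρ`.
-/

open scoped ENNReal
open Classical

open Filter Topology Set

theorem tendsto_rpow_mul_exp_div_nhdsGT_zero (γ : ℝ) {c : ℝ} (hc : 0 < c) :
    Tendsto (fun t : ℝ => t ^ γ * Real.exp (c / t)) (𝓝[>] 0) atTop := by
  have hexp : Tendsto (fun u : ℝ => c ^ γ * (Real.exp u / u ^ γ)) atTop atTop :=
    (tendsto_exp_div_rpow_atTop γ).const_mul_atTop (Real.rpow_pos_of_pos hc γ)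
  have hinv : Tendsto (fun t : ℝ => c / t) (𝓝[>] 0) atTop := by
    simpa [div_eq_mul_inv] using tendsto_inv_nhdsGT_zero.const_mul_atTop hc
  refine (hexp.comp hinv).congr' ?_
  filter_upwards [self_mem_nhdsWithin] with t (ht : 0 < t)
  -- substituting `u = c / t`: `c ^ γ * (exp u / u ^ γ) = t ^ γ * exp u`
  simp only [Function.comp, Real.div_rpow hc.le ht.le]
  field_simp

section Blowup

variable {ι : Type*} {l : Filter ι} {ρ : ι → ℝ}

theorem tendsto_half_mul_norm_sq_div_atTop {E : Type*} [NormedAddCommGroup E]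
    {m : ι → E} {m₀ : E} (hρ : Tendsto ρ l (𝓝[>] 0)) (hm : Tendsto m l (𝓝 m₀))
    (hm₀ : m₀ ≠ 0) :
    Tendsto (fun i => 1 / 2 * ‖m i‖ ^ 2 / ρ i) l atTop := by
  have hnum : Tendsto (fun i => 1 / 2 * ‖m i‖ ^ 2) l (𝓝 (1 / 2 * ‖m₀‖ ^ 2)) :=
    (hm.norm.pow 2).const_mul _
  simpa only [div_eq_mul_inv, Function.comp_def] using
    hnum.pos_mul_atTop (by positivity) (tendsto_inv_nhdsGT_zero.comp hρ)

theorem tendsto_mul_rpow_mul_exp_div_atTop {κ β γ : ℝ} (hκ : 0 < κ) (hβ : 0 < β)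
    {S : ι → ℝ} {S₀ : ℝ} (hρ : Tendsto ρ l (𝓝[>] 0)) (hS : Tendsto S l (𝓝 S₀))
    (hS₀ : 0 < S₀) :
    Tendsto (fun i => κ * ρ i ^ γ * Real.exp (β * S i / ρ i)) l atTop := by
  have hlower : Tendsto (fun i => κ * (ρ i ^ γ * Real.exp (β * (S₀ / 2) / ρ i))) l atTop :=
    ((tendsto_rpow_mul_exp_div_nhdsGT_zero γ (by positivity)).comp hρ).const_mul_atTop hκ
  refine tendsto_atTop_mono' l ?_ hlower
  filter_upwards [hρ self_mem_nhdsWithin, hS.eventually (lt_mem_nhds (half_lt_self hS₀))]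
    with i (hρi : 0 < ρ i) hSi
  rw [← mul_assoc]
  gcongr

end Blowup

theorem lowerSemicontinuous_ite_pos {X : Type*} [TopologicalSpace X] {g : ℝ × X → ℝ}
    {Z : Set X} (hg : ContinuousOn g {p | 0 < p.1}) (hZ : IsClosed Z)
    (hblow : ∀ x ∉ Z, Tendsto g (𝓝[{p | 0 < p.1}] (0, x)) atTop) :
    LowerSemicontinuous fun p : ℝ × X =>
      if 0 < p.1 then ENNReal.ofReal (g p) else if p.1 = 0 ∧ p.2 ∈ Z then 0 else ⊤ := by
  set f : ℝ × X → ℝ≥0∞ := fun p =>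
    if 0 < p.1 then ENNReal.ofReal (g p) else if p.1 = 0 ∧ p.2 ∈ Z then 0 else ⊤
  have hopen : IsOpen {p : ℝ × X | 0 < p.1} := isOpen_lt continuous_const continuous_fst
  rintro ⟨ρ, x⟩
  rcases lt_trichotomy ρ 0 with hρ | rfl | hρ
  · refine ContinuousAt.lowerSemicontinuousAt (tendsto_const_nhds.congr' ?_)
    filter_upwards [continuous_fst.continuousAt.eventually_lt_const hρ] with p (hp : p.1 < 0)
    simp [f, hρ.not_gt, hρ.ne, hp.not_gt, hp.ne]
  · by_cases hx : x ∈ Z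
    · intro y hy
      simp [f, hx] at hy
    have hfx : f (0, x) = ⊤ := by simp [f, hx]
    refine ContinuousAt.lowerSemicontinuousAt ?_
    -- on `{ρ > 0}` the blow-up gives `f → ⊤`; on `{ρ ≤ 0}` near `(0, x)` we have `f = ⊤`
    -- because `Zᶜ` is open
    rw [ContinuousAt, hfx, nhds_eq_nhdsWithin_sup_nhdsWithin _ (union_compl_self _).symm]
    refine Tendsto.sup ?_ (tendsto_const_nhds.congr' ?_)
    · refine (ENNReal.tendsto_ofReal_atTop.comp (hblow x hx)).congr' ?_
      filter_upwards [self_mem_nhdsWithin] with p (hp : 0 < p.1)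
      simp [f, hp]
    · have hZc : ∀ᶠ p in 𝓝 ((0 : ℝ), x), p.2 ∉ Z :=
        continuous_snd.continuousAt.eventually_mem
          (hZ.isOpen_compl.mem_nhds (show x ∈ Zᶜ from hx))
      filter_upwards [self_mem_nhdsWithin, nhdsWithin_le_nhds hZc] with p (hp : ¬0 < p.1) hpZ
      simp [f, hp, hpZ]
  · refine ContinuousAt.lowerSemicontinuousAt
      ((ENNReal.continuous_ofReal.continuousAt.comp
        (hg.continuousAt (hopen.mem_nhds hρ))).congr ?_)
    filter_upwards [hopen.mem_nhds hρ] with p (hp : 0 < p.1)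
    simp [f, hp]

section EulerEnergy

variable {E : Type*} [NormedAddCommGroup E]

noncomputable def eulerEnergy (a γ : ℝ) (p : ℝ × E × ℝ) : ℝ :=
  1 / 2 * ‖p.2.1‖ ^ 2 / p.1 + a / (γ - 1) * p.1 ^ γ * Real.exp ((γ - 1) * p.2.2 / p.1)

theorem continuousOn_eulerEnergy (a γ : ℝ) :
    ContinuousOn (eulerEnergy (E := E) a γ) {p | 0 < p.1} := by
  intro p hp
  have hp : p.1 ≠ 0 := ne_of_gt hp
  refine ContinuousAt.continuousWithinAt ?_
  exact ((continuousAt_const.mul (continuous_snd.fst.norm.pow 2).continuousAt).div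
    continuousAt_fst hp).add ((continuousAt_const.mul (continuousAt_fst.rpow_const (Or.inl hp))).mul
      ((continuousAt_const.mul continuous_snd.snd.continuousAt).div continuousAt_fst hp).rexp)

theorem tendsto_eulerEnergy_atTop {a γ : ℝ} (ha : 0 < a) (hγ : 1 < γ) {m : E} {S : ℝ}
    (hmS : (m, S) ∉ ({0} ×ˢ Iic 0 : Set (E × ℝ))) :
    Tendsto (eulerEnergy a γ) (𝓝[{p | 0 < p.1}] (0, m, S)) atTop := by
  set l := 𝓝[{p : ℝ × E × ℝ | 0 < p.1}] (0, m, S)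
  have hρ : Tendsto (fun p : ℝ × E × ℝ => p.1) l (𝓝[>] 0) :=
    continuous_fst.continuousWithinAt.tendsto_nhdsWithin fun _ h => h
  have hm : Tendsto (fun p : ℝ × E × ℝ => p.2.1) l (𝓝 m) :=
    (continuous_snd.fst.tendsto _).mono_left nhdsWithin_le_nhds
  have hS : Tendsto (fun p : ℝ × E × ℝ => p.2.2) l (𝓝 S) :=
    (continuous_snd.snd.tendsto _).mono_left nhdsWithin_le_nhds
  have hpos : ∀ᶠ p in l, 0 < p.1 := self_mem_nhdsWithin
  rcases not_and_or.mp hmS with hm₀ | hS₀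
  · refine tendsto_atTop_add_right_of_le' l 0
      (tendsto_half_mul_norm_sq_div_atTop hρ hm hm₀) ?_
    filter_upwards [hpos] with p hp
    positivity
  · refine tendsto_atTop_add_left_of_le' l 0 ?_ (tendsto_mul_rpow_mul_exp_div_atTop
      (div_pos ha (sub_pos.mpr hγ)) (sub_pos.mpr hγ) hρ hS (not_le.mp hS₀))
    filter_upwards [hpos] with p hp
    positivity

end EulerEnergy

theorem totalEnergy_lowerSemicontinuous_general (a γ : ℝ) (ha : 0 < a) (hγ : 1 < γ)
    (d : ℕ) :
    LowerSemicontinuous (totalEnergy a γ d) := by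
  convert lowerSemicontinuous_ite_pos
    (continuousOn_eulerEnergy (E := EuclideanSpace ℝ (Fin d)) a γ)
    (isClosed_singleton.prod isClosed_Iic) (fun _ hx => tendsto_eulerEnergy_atTop ha hγ hx)
    with p
  simp only [totalEnergy, eulerEnergy, mem_prod, mem_singleton_iff, mem_Iic]

/-- The total energy is lower semicontinuous on `ℝ^{d+2}`. -/
theorem totalEnergy_lowerSemicontinuous (a γ : ℝ) (ha : 0 < a) (hγ : 1 < γ)
    (d : ℕ) (hd : 1 ≤ d) :
    LowerSemicontinuous (totalEnergy a γ d) :=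
  totalEnergy_lowerSemicontinuous_general a γ ha hγ d
end

section
/- There exists a constant C > 0 (depending only on γ, a, d) such that for all ρ > 0, S ≥ 0 and m ∈ ℝ^d: ρ^γ + S^γ + |m|^{2γ/(γ+1)} ≤ C (1 + (1/2)|m|²/ρ + (a/(γ−1)) ρ^γ exp((γ−1) S/ρ)). -/
open Real

lemma pow_div_le_exp' {x : ℝ} (hx : 0 ≤ x) (n : ℕ) (hn : 1 ≤ n) :
    (x / n) ^ n ≤ Real.exp x := by
  have hn' : (0:ℝ) < n := by exact_mod_cast hn
  have h0 : 0 ≤ x / n := div_nonneg hx hn'.le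
  have h1 : x / n ≤ Real.exp (x / n) := by
    have := Real.add_one_le_exp (x / n)
    linarith
  calc (x / n) ^ n ≤ (Real.exp (x / n)) ^ n := pow_le_pow_left₀ h0 h1 n
    _ = Real.exp (n * (x / n)) := (Real.exp_nat_mul _ n).symm
    _ = Real.exp x := by rw [mul_div_cancel₀ _ (ne_of_gt hn')]

/-- Coercivity of the total energy: `ρ^γ + S^γ + |m|^(2γ/(γ+1))` is dominated by a
constant multiple of `1 + E(ρ, m, S)`. -/
theorem energy_coercivity (a γ : ℝ) (ha : 0 < a) (hγ : 1 < γ) (d : ℕ) (hd : 1 ≤ d) :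
    ∃ C : ℝ, 0 < C ∧
      ∀ (ρ S : ℝ) (m : EuclideanSpace ℝ (Fin d)), 0 < ρ → 0 ≤ S →
        ρ ^ γ + S ^ γ + ‖m‖ ^ (2 * γ / (γ + 1)) ≤
          C * (1 + (1 / 2) * ‖m‖ ^ 2 / ρ +
            a / (γ - 1) * ρ ^ γ * Real.exp ((γ - 1) * S / ρ)) := by
  set n : ℕ := ⌈γ⌉₊ with hn
  have hγ0 : 0 < γ - 1 := by linarith
  have hγ1 : (0:ℝ) < γ + 1 := by linarith
  have hγn : γ ≤ (n : ℝ) := Nat.le_ceil γ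
  have hn1 : 1 ≤ n := by
    have h : (1:ℝ) ≤ (n:ℝ) := le_trans hγ.le hγn
    exact_mod_cast h
  have hnpos : (0:ℝ) < (n:ℝ) := by exact_mod_cast hn1
  set K : ℝ := ((n : ℝ) / (γ - 1)) ^ n with hKdef
  have hK : 0 < K := pow_pos (div_pos hnpos hγ0) n
  set M : ℝ := (3 + K) * (γ - 1) / a with hMdef
  have hM : 0 < M := by positivity
  refine ⟨max 2 M, lt_of_lt_of_le two_pos (le_max_left _ _), ?_⟩
  intro ρ S m hρ hS
  set r := ‖m‖ with hr'
  have hr : 0 ≤ r := norm_nonneg m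
  set e := Real.exp ((γ - 1) * S / ρ) with he'
  have he1 : 1 ≤ e := Real.one_le_exp (by positivity)
  have hρg : 0 < ρ ^ γ := Real.rpow_pos_of_pos hρ γ
  -- bound on S^γ
  have hSb : S ^ γ ≤ ρ ^ γ + K * (ρ ^ γ * e) := by
    rcases le_or_gt S ρ with h | h
    · have h1 : S ^ γ ≤ ρ ^ γ := Real.rpow_le_rpow hS h (by linarith)
      have h2 : 0 < ρ ^ γ * e := by positivity
      linarith [mul_pos hK h2]
    · have hSpos : 0 < S := lt_trans hρ h
      have ht1 : 1 ≤ S / ρ := (one_le_div hρ).2 h.le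
      have hx : 0 ≤ (γ - 1) * S / ρ := by positivity
      have hexp : (((γ - 1) * S / ρ) / n) ^ n ≤ e := pow_div_le_exp' hx n hn1
      have key : (S / ρ) ^ n ≤ K * e := by
        have h3 := mul_le_mul_of_nonneg_left hexp hK.le
        calc (S / ρ) ^ n = K * ((((γ - 1) * S / ρ)) / n) ^ n := by
              rw [hKdef, ← mul_pow]
              congr 1
              field_simp
          _ ≤ K * e := h3
      have h4 : (S / ρ) ^ (γ:ℝ) ≤ (S / ρ) ^ ((n:ℕ):ℝ) :=
        Real.rpow_le_rpow_of_exponent_le ht1 hγn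
      have h5 : (S / ρ) ^ ((n:ℕ):ℝ) = (S / ρ) ^ n := Real.rpow_natCast _ n
      have h6 : S ^ γ = ρ ^ γ * (S / ρ) ^ (γ:ℝ) := by
        rw [Real.div_rpow hS hρ.le]
        field_simp
      calc S ^ γ = ρ ^ γ * (S / ρ) ^ (γ:ℝ) := h6
        _ ≤ ρ ^ γ * (K * e) := by
            apply mul_le_mul_of_nonneg_left _ hρg.le
            rw [← h5] at key
            exact le_trans h4 key
        _ ≤ ρ ^ γ + K * (ρ ^ γ * e) := by nlinarith
  -- Young's inequality for the momentum term
  have hYoung : r ^ (2 * γ / (γ + 1)) ≤ r ^ 2 / ρ + ρ ^ γ := by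
    have hw1 : (0:ℝ) ≤ γ / (γ + 1) := by positivity
    have hw2 : (0:ℝ) ≤ 1 / (γ + 1) := by positivity
    have hsum : γ / (γ + 1) + 1 / (γ + 1) = 1 := by field_simp
    have hp1 : (0:ℝ) ≤ r ^ 2 / ρ := by positivity
    have hp2 : (0:ℝ) ≤ ρ ^ γ := hρg.le
    have h := Real.geom_mean_le_arith_mean2_weighted hw1 hw2 hp1 hp2 hsum
    have heq : (r ^ 2 / ρ) ^ (γ / (γ + 1)) * (ρ ^ γ) ^ (1 / (γ + 1)) =
        r ^ (2 * γ / (γ + 1)) := by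
      rw [Real.div_rpow (by positivity) hρ.le, ← Real.rpow_mul hρ.le,
        div_mul_eq_mul_div, ← Real.rpow_natCast r 2, ← Real.rpow_mul hr,
        mul_div_assoc, ← Real.rpow_sub hρ,
        show γ * (1 / (γ + 1)) - γ / (γ + 1) = 0 by ring, Real.rpow_zero, mul_one]
      congr 1
      push_cast
      ring
    rw [heq] at h
    have h1 : γ / (γ + 1) * (r ^ 2 / ρ) ≤ r ^ 2 / ρ := by
      apply mul_le_of_le_one_left hp1
      rw [div_le_one hγ1]; linarith
    have h2 : 1 / (γ + 1) * ρ ^ γ ≤ ρ ^ γ := by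
      apply mul_le_of_le_one_left hp2
      rw [div_le_one hγ1]; linarith
    linarith
  -- assemble
  have hρe : ρ ^ γ ≤ ρ ^ γ * e := le_mul_of_one_le_right hρg.le he1
  have hCM : M ≤ max 2 M := le_max_right _ _
  have hC2 : (2:ℝ) ≤ max 2 M := le_max_left _ _
  have hMa : M * (a / (γ - 1)) = 3 + K := by
    rw [hMdef]; field_simp
  have hterm : 0 < a / (γ - 1) * ρ ^ γ * e := by positivity
  have hr2 : 0 ≤ r ^ 2 / ρ := by positivity
  have hkey : r ^ 2 / ρ + (3 + K) * (ρ ^ γ * e) ≤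
      max 2 M * (1 + 1 / 2 * r ^ 2 / ρ + a / (γ - 1) * ρ ^ γ * e) := by
    have e1 : (2:ℝ) * (1 / 2 * r ^ 2 / ρ) ≤ max 2 M * (1 / 2 * r ^ 2 / ρ) := by
      apply mul_le_mul_of_nonneg_right hC2 (by positivity)
    have e2 : M * (a / (γ - 1) * ρ ^ γ * e) ≤ max 2 M * (a / (γ - 1) * ρ ^ γ * e) :=
      mul_le_mul_of_nonneg_right hCM hterm.le
    have e3 : M * (a / (γ - 1) * ρ ^ γ * e) = (3 + K) * (ρ ^ γ * e) := by
      rw [show a / (γ - 1) * ρ ^ γ * e = a / (γ - 1) * (ρ ^ γ * e) by ring,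
        ← mul_assoc, hMa]
    have e4 : 0 ≤ max 2 M * 1 := by positivity
    have hhalf : (2:ℝ) * (1 / 2 * r ^ 2 / ρ) = r ^ 2 / ρ := by ring
    have hexpand : max 2 M * (1 + 1 / 2 * r ^ 2 / ρ + a / (γ - 1) * ρ ^ γ * e) =
        max 2 M * 1 + max 2 M * (1 / 2 * r ^ 2 / ρ) +
          max 2 M * (a / (γ - 1) * ρ ^ γ * e) := by ring
    linarith
  calc ρ ^ γ + S ^ γ + r ^ (2 * γ / (γ + 1))
      ≤ ρ ^ γ + (ρ ^ γ + K * (ρ ^ γ * e)) + (r ^ 2 / ρ + ρ ^ γ) := by linarith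
    _ ≤ r ^ 2 / ρ + (3 + K) * (ρ ^ γ * e) := by
        have : (3 + K) * (ρ ^ γ * e) = 3 * (ρ ^ γ * e) + K * (ρ ^ γ * e) := by ring
        linarith
    _ ≤ max 2 M * (1 + 1 / 2 * r ^ 2 / ρ + a / (γ - 1) * ρ ^ γ * e) := hkey
end
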